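/- Let ψ and φ be pure states on ℂ^d. If there exists a strictly incoherent operation T with T(|φ⟩⟨φ|) = |ψ⟩⟨ψ|, then Δ(ψ) majorizes Δ(φ), i.e., Δ(ψ) ≻ Δ(φ). -/

import Mathlib

namespace Coherence

open Matrix
open scoped BigOperators ComplexOrder

variable {ι κ : Type*} [Fintype ι] [DecidableEq ι] [Fintype κ] [DecidableEq κ]

/-- A density matrix: positive semidefinite with unit trace. -/
def IsDensity (ρ : Matrix ι ι ℂ) : Prop := ρ.PosSemidef ∧ ρ.trace = 1

/-- The dephasing (decohering) map Δ in the fixed (incoherent) basis. -/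
def dephase (ρ : Matrix ι ι ℂ) : Matrix ι ι ℂ := Matrix.diagonal (fun i => ρ i i)

/-- The pure state |v⟩⟨v| associated with a vector `v`. -/
def pureState (v : ι → ℂ) : Matrix ι ι ℂ := Matrix.of fun i j => v i * star (v j)

/-- `v` is a unit vector. -/
def IsUnitVec (v : ι → ℂ) : Prop := ∑ i, ‖v i‖ ^ 2 = 1

/-- An incoherent Kraus operator: each column has at most one nonzero entry,
i.e. `K = ∑ i c(i) |j(i)⟩⟨i|` for a function `j` on basis indices. -/
def IncoherentKraus (K : Matrix κ ι ℂ) : Prop :=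
  ∀ i : ι, ∃ j : κ, ∀ j' : κ, K j' i ≠ 0 → j' = j

/-- A strictly incoherent Kraus operator: `K` and `K†` are both incoherent. -/
def StrictlyIncoherentKraus (K : Matrix κ ι ℂ) : Prop :=
  IncoherentKraus K ∧ IncoherentKraus Kᴴ

/-- An incoherent operation: a cptp map admitting a Kraus representation by
incoherent Kraus operators. -/
def IsIncoherentOp (T : Matrix ι ι ℂ → Matrix κ κ ℂ) : Prop :=
  ∃ (m : ℕ) (K : Fin m → Matrix κ ι ℂ),
    (∀ ℓ, IncoherentKraus (K ℓ)) ∧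
    (∑ ℓ, (K ℓ)ᴴ * K ℓ = 1) ∧
    (∀ ρ, T ρ = ∑ ℓ, K ℓ * ρ * (K ℓ)ᴴ)

/-- A strictly incoherent operation. -/
def IsStrictlyIncoherentOp (T : Matrix ι ι ℂ → Matrix κ κ ℂ) : Prop :=
  ∃ (m : ℕ) (K : Fin m → Matrix κ ι ℂ),
    (∀ ℓ, StrictlyIncoherentKraus (K ℓ)) ∧
    (∑ ℓ, (K ℓ)ᴴ * K ℓ = 1) ∧
    (∀ ρ, T ρ = ∑ ℓ, K ℓ * ρ * (K ℓ)ᴴ)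

/-- Functional calculus for Hermitian matrices (junk value `0` otherwise). -/
noncomputable def matFun (f : ℝ → ℝ) (A : Matrix ι ι ℂ) : Matrix ι ι ℂ :=
  if h : A.IsHermitian then
    (h.eigenvectorUnitary : Matrix ι ι ℂ) *
      Matrix.diagonal (fun i => (f (h.eigenvalues i) : ℂ)) *
      (star (h.eigenvectorUnitary : Matrix ι ι ℂ))
  else 0

/-- Von Neumann entropy `S(ρ) = −tr ρ log₂ ρ` (with the convention 0 log 0 = 0). -/
noncomputable def vN (ρ : Matrix ι ι ℂ) : ℝ :=
  if h : ρ.IsHermitian then -∑ i, h.eigenvalues i * Real.logb 2 (h.eigenvalues i) else 0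

noncomputable def matLog2 (A : Matrix ι ι ℂ) : Matrix ι ι ℂ := matFun (Real.logb 2) A

noncomputable def matSqrt (A : Matrix ι ι ℂ) : Matrix ι ι ℂ := matFun Real.sqrt A

/-- Quantum relative entropy `S(ρ‖σ) = tr ρ (log₂ ρ − log₂ σ)`. -/
noncomputable def relEnt (ρ σ : Matrix ι ι ℂ) : ℝ :=
  ((ρ * (matLog2 ρ - matLog2 σ)).trace).re

/-- Fidelity `F(ρ,σ) = tr √(√ρ σ √ρ)`. -/
noncomputable def fidelity (ρ σ : Matrix ι ι ℂ) : ℝ :=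
  ((matSqrt (matSqrt ρ * σ * matSqrt ρ)).trace).re

/-- Trace norm `‖A‖₁ = tr √(A†A)`. -/
noncomputable def traceNorm (A : Matrix ι ι ℂ) : ℝ :=
  ((matSqrt (Aᴴ * A)).trace).re

/-- Bures distance `B(ρ,σ) = √2 √(1 − F(ρ,σ))`. -/
noncomputable def bures (ρ σ : Matrix ι ι ℂ) : ℝ :=
  Real.sqrt 2 * Real.sqrt (1 - fidelity ρ σ)

/-- Binary entropy function. -/
noncomputable def binEnt (x : ℝ) : ℝ :=
  -(x * Real.logb 2 x) - (1 - x) * Real.logb 2 (1 - x)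

/-- The `n`-fold tensor (Kronecker) power of a matrix, with indices the product basis. -/
def tpow (ρ : Matrix ι ι ℂ) (n : ℕ) : Matrix (Fin n → ι) (Fin n → ι) ℂ :=
  Matrix.of fun i j => ∏ t, ρ (i t) (j t)

/-- The unit (qubit maximally coherent) state Φ₂. -/
noncomputable def Phi2 : Matrix (Fin 2) (Fin 2) ℂ := Matrix.of fun _ _ => (1 / 2 : ℂ)

/-- Relative entropy of coherence `C_r(ρ) = S(Δ(ρ)) − S(ρ)`. -/
noncomputable def Cr (ρ : Matrix ι ι ℂ) : ℝ := vN (dephase ρ) - vN ρ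

/-- Coherence of formation: the least average entropy of coherence over finite
pure-state decompositions of `ρ`. -/
noncomputable def Cf (ρ : Matrix ι ι ℂ) : ℝ :=
  sInf {x | ∃ (m : ℕ) (p : Fin m → ℝ) (v : Fin m → ι → ℂ),
    (∀ k, 0 ≤ p k) ∧ (∀ k, IsUnitVec (v k)) ∧
    ρ = ∑ k, (p k : ℂ) • pureState (v k) ∧
    x = ∑ k, p k * vN (dephase (pureState (v k)))}

/-- `R` is an achievable coherence-distillation rate for `ρ`. -/
def DistillRate {d : ℕ} (ρ : Matrix (Fin d) (Fin d) ℂ) (R : ℝ) : Prop :=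
  0 ≤ R ∧ ∀ ε > 0, ∃ N : ℕ, ∀ n ≥ N,
    ∃ T : Matrix (Fin n → Fin d) (Fin n → Fin d) ℂ →
          Matrix (Fin ⌊(n : ℝ) * R⌋₊ → Fin 2) (Fin ⌊(n : ℝ) * R⌋₊ → Fin 2) ℂ,
      IsIncoherentOp T ∧ 1 - ε ≤ fidelity (T (tpow ρ n)) (tpow Phi2 ⌊(n : ℝ) * R⌋₊)

/-- Distillable coherence. -/
noncomputable def Cd {d : ℕ} (ρ : Matrix (Fin d) (Fin d) ℂ) : ℝ :=
  sSup {R | DistillRate ρ R}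

/-- `R` is an achievable coherence-formation rate for `ρ`. -/
def FormRate {d : ℕ} (ρ : Matrix (Fin d) (Fin d) ℂ) (R : ℝ) : Prop :=
  0 ≤ R ∧ ∀ ε > 0, ∃ N : ℕ, ∀ n ≥ N,
    ∃ T : Matrix (Fin ⌈(n : ℝ) * R⌉₊ → Fin 2) (Fin ⌈(n : ℝ) * R⌉₊ → Fin 2) ℂ →
          Matrix (Fin n → Fin d) (Fin n → Fin d) ℂ,
      IsIncoherentOp T ∧ 1 - ε ≤ fidelity (T (tpow Phi2 ⌈(n : ℝ) * R⌉₊)) (tpow ρ n)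

/-- Coherence cost. -/
noncomputable def Cc {d : ℕ} (ρ : Matrix (Fin d) (Fin d) ℂ) : ℝ :=
  sInf {R | FormRate ρ R}

/-- Sum of the `t` largest entries of the vector `p` (as a sup over size-`t` subsets). -/
noncomputable def sumTop (p : ι → ℝ) (t : ℕ) : ℝ :=
  sSup {x | ∃ A : Finset ι, A.card = t ∧ x = ∑ i ∈ A, p i}

/-- The spectrum of a Hermitian matrix (junk value `0` otherwise). -/
noncomputable def matSpectrum (A : Matrix ι ι ℂ) : ι → ℝ :=
  if h : A.IsHermitian then h.eigenvalues else 0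

/-- `A ≻ B`: the spectrum of `A` majorizes the spectrum of `B`. -/
def MajorizesMat (A B : Matrix ι ι ℂ) : Prop :=
  (∀ t : ℕ, sumTop (matSpectrum B) t ≤ sumTop (matSpectrum A) t) ∧
  ∑ i, matSpectrum A i = ∑ i, matSpectrum B i

/-! Write `T ρ = ∑ₖ Kₖ ρ Kₖ†`. Since `|w⟩⟨w| = ∑ₖ |Kₖ v⟩⟨Kₖ v|` is pure, every `Kₖ v` equals
`cₖ w` with `∑ₖ |cₖ|² = 1`. A strictly incoherent `Kₖ` has at most one nonzero entry in each row
and each column, so the weight `∑_{i ∈ A} ∑ⱼ |(Kₖ)ⱼᵢ vᵢ|²` carried by an index set `A` lands on at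
most `|A|` coordinates of `Kₖ v = cₖ w`, and is therefore at most `|cₖ|²` times the sum of the
`|A|` largest `|wⱼ|²`. Summing over `k` with `∑ₖ Kₖ†Kₖ = 1` bounds `∑_{i ∈ A} |vᵢ|²` by that sum,
which is the majorization, because the spectrum of a real diagonal matrix is a permutation of its
diagonal. -/

theorem _root_.Equiv.exists_perm_comp_eq_of_map_univ_eq {α β : Type*} [Fintype α]
    [DecidableEq β] {f g : α → β} (h : Finset.univ.val.map f = Finset.univ.val.map g) :
    ∃ σ : Equiv.Perm α, g ∘ σ = f := by
  have hfib : ∀ b, Fintype.card {a // f a = b} = Fintype.card {a // g a = b} := fun b => by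
    simpa [Multiset.count_map, Fintype.card_subtype, Finset.card_def, eq_comm]
      using congrArg (Multiset.count b) h
  exact ⟨Equiv.ofFiberEquiv fun b => Fintype.equivOfCardEq (hfib b),
    funext (Equiv.ofFiberEquiv_map _)⟩

theorem _root_.Matrix.eq_vecMulVec_of_mul_conjTranspose_eq {R n l : Type*} [CommRing R]
    [StarRing R] [PartialOrder R] [StarOrderedRing R] [NoZeroDivisors R] [Fintype n]
    [DecidableEq n] [Fintype l] {U : Matrix n l R} {w : n → R} (hw : star w ⬝ᵥ w = 1)
    (h : U * Uᴴ = vecMulVec w (star w)) : U = vecMulVec w (star w ᵥ* U) := by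
  set P := vecMulVec w (star w)
  have hPP : P * P = P := by rw [vecMulVec_mul_vecMulVec, hw, one_smul]
  have hPH : Pᴴ = P := by simp [P, conjTranspose_vecMulVec]
  -- `((1 - P) U) ((1 - P) U)ᴴ = (1 - P) P (1 - P) = 0`
  have hQU : (1 - P) * U = 0 := by
    rw [← self_mul_conjTranspose_eq_zero, conjTranspose_mul, conjTranspose_sub, conjTranspose_one,
      hPH, Matrix.mul_assoc, ← Matrix.mul_assoc U, h, Matrix.mul_sub, Matrix.mul_one, hPP,
      sub_self, Matrix.mul_zero]
  rw [Matrix.sub_mul, Matrix.one_mul, sub_eq_zero] at hQU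
  rw [← vecMulVec_mul, ← hQU]

section SumTop

variable {n : Type*} [Fintype n]

theorem bddAbove_sumTop_set (p : n → ℝ) (t : ℕ) :
    BddAbove {x | ∃ A : Finset n, A.card = t ∧ x = ∑ i ∈ A, p i} :=
  ((Set.finite_range fun A : Finset n => ∑ i ∈ A, p i).subset
    (by rintro _ ⟨A, -, rfl⟩; exact ⟨A, rfl⟩)).bddAbove

theorem sum_le_sumTop (p : n → ℝ) (A : Finset n) : ∑ i ∈ A, p i ≤ sumTop p A.card :=
  le_csSup (bddAbove_sumTop_set p _) ⟨A, rfl, rfl⟩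

theorem sum_le_sumTop_of_card_le {p : n → ℝ} (hp : 0 ≤ p) {B : Finset n} {t : ℕ}
    (hB : B.card ≤ t) (ht : t ≤ Fintype.card n) : ∑ i ∈ B, p i ≤ sumTop p t := by
  obtain ⟨A, hBA, rfl⟩ := Finset.exists_superset_card_eq hB ht
  exact (Finset.sum_le_sum_of_subset_of_nonneg hBA fun i _ _ => hp i).trans (sum_le_sumTop p A)

theorem sumTop_of_card_lt (p : n → ℝ) {t : ℕ} (ht : Fintype.card n < t) : sumTop p t = 0 := by
  rw [sumTop, Set.eq_empty_of_forall_notMem (s := {x | _}), Real.sSup_empty]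
  rintro _ ⟨A, rfl, -⟩
  exact ht.not_ge A.card_le_univ

theorem sumTop_le_sumTop {p q : n → ℝ} (h : ∀ A : Finset n, ∑ i ∈ A, q i ≤ sumTop p A.card)
    (t : ℕ) : sumTop q t ≤ sumTop p t := by
  rcases le_or_gt t (Fintype.card n) with ht | ht
  · obtain ⟨A, -, hA⟩ := Finset.exists_subset_card_eq (s := Finset.univ) ht
    exact csSup_le ⟨_, A, hA, rfl⟩ (by rintro _ ⟨B, rfl, rfl⟩; exact h B)
  · rw [sumTop_of_card_lt q ht, sumTop_of_card_lt p ht]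

theorem sumTop_comp_perm (p : n → ℝ) (σ : Equiv.Perm n) (t : ℕ) :
    sumTop (p ∘ σ) t = sumTop p t := by
  have key : ∀ (q : n → ℝ) (τ : Equiv.Perm n), sumTop (q ∘ τ) t ≤ sumTop q t :=
    fun q τ => sumTop_le_sumTop (fun A => by
      simpa [Finset.sum_map] using sum_le_sumTop q (A.map τ.toEmbedding)) t
  refine le_antisymm (key p σ) ?_
  simpa [Function.comp_assoc] using key (p ∘ σ) σ.symm

end SumTop

section Spectrum

variable {n : Type*} [Fintype n] [DecidableEq n]

omit [Fintype n] in
theorem isHermitian_diagonal_ofReal (p : n → ℝ) :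
    (diagonal fun i => (p i : ℂ)).IsHermitian :=
  isHermitian_diagonal_of_self_adjoint _ (by ext i; simp)

theorem map_eigenvalues_diagonal_ofReal (p : n → ℝ) :
    Finset.univ.val.map (isHermitian_diagonal_ofReal p).eigenvalues = Finset.univ.val.map p := by
  have h := (isHermitian_diagonal_ofReal p).roots_charpoly_eq_eigenvalues
  rw [charpoly_diagonal, Polynomial.roots_prod _ _ (Finset.prod_ne_zero_iff.mpr
    fun i _ => Polynomial.X_sub_C_ne_zero _)] at h
  refine Multiset.map_injective Complex.ofReal_injective ?_
  simpa [Multiset.map_map, Function.comp_def, Multiset.bind_singleton] using h.symm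

theorem exists_perm_matSpectrum_diagonal_ofReal (p : n → ℝ) :
    ∃ σ : Equiv.Perm n, p ∘ σ = matSpectrum (diagonal fun i => (p i : ℂ)) := by
  rw [matSpectrum, dif_pos (isHermitian_diagonal_ofReal p)]
  exact Equiv.exists_perm_comp_eq_of_map_univ_eq (map_eigenvalues_diagonal_ofReal p)

theorem majorizesMat_diagonal_ofReal {p q : n → ℝ}
    (h : ∀ A : Finset n, ∑ i ∈ A, q i ≤ sumTop p A.card) (hsum : ∑ i, p i = ∑ i, q i) :
    MajorizesMat (diagonal fun i => (p i : ℂ)) (diagonal fun i => (q i : ℂ)) := by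
  obtain ⟨σ, hσ⟩ := exists_perm_matSpectrum_diagonal_ofReal p
  obtain ⟨τ, hτ⟩ := exists_perm_matSpectrum_diagonal_ofReal q
  refine ⟨fun t => ?_, ?_⟩
  · rw [← hσ, ← hτ, sumTop_comp_perm, sumTop_comp_perm]
    exact sumTop_le_sumTop h t
  · rw [← hσ, ← hτ]
    simpa only [Function.comp_apply, Equiv.sum_comp] using hsum

end Spectrum

section PureState

variable {n : Type*} [Fintype n]

omit [Fintype n] in
theorem pureState_eq_vecMulVec (x : n → ℂ) : pureState x = vecMulVec x (star x) := rfl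

theorem IsUnitVec.star_dotProduct_self {w : n → ℂ} (hw : IsUnitVec w) : star w ⬝ᵥ w = 1 := by
  simp only [dotProduct, Pi.star_apply, Complex.star_def, Complex.conj_mul']
  exact_mod_cast show ∑ i, ‖w i‖ ^ 2 = 1 from hw

theorem trace_pureState (x : n → ℂ) : (pureState x).trace = ((∑ i, ‖x i‖ ^ 2 : ℝ) : ℂ) := by
  simp [trace, pureState, Complex.mul_conj']

theorem mul_pureState_mul_conjTranspose {m : Type*} (K : Matrix m n ℂ) (v : n → ℂ) :
    K * pureState v * Kᴴ = pureState (K *ᵥ v) := by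
  rw [pureState_eq_vecMulVec, mul_vecMulVec, vecMulVec_mul, ← star_mulVec, pureState_eq_vecMulVec]

variable [DecidableEq n]

omit [Fintype n] in
theorem dephase_pureState (v : n → ℂ) :
    dephase (pureState v) = diagonal fun i => ((‖v i‖ ^ 2 : ℝ) : ℂ) := by
  simp [dephase, pureState, Complex.mul_conj']

theorem exists_smul_eq_of_sum_pureState_eq {l : Type*} [Fintype l] {u : l → n → ℂ} {w : n → ℂ}
    (hw : IsUnitVec w) (h : ∑ k, pureState (u k) = pureState w) :
    ∃ c : l → ℂ, (∀ k, u k = c k • w) ∧ ∑ k, ‖c k‖ ^ 2 = 1 := by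
  set U : Matrix n l ℂ := of fun i k => u k i
  have hU : U * Uᴴ = vecMulVec w (star w) := by
    ext i j
    simpa [U, mul_apply, pureState, vecMulVec_apply, Matrix.sum_apply] using congrFun₂ h i j
  have hcol : ∀ k, u k = (star w ᵥ* U) k • w := fun k => funext fun i => by
    simpa [U, vecMulVec_apply, mul_comm] using
      congrFun₂ (eq_vecMulVec_of_mul_conjTranspose_eq hw.star_dotProduct_self hU) i k
  refine ⟨star w ᵥ* U, hcol, ?_⟩
  have htr := congrArg trace h
  simp only [trace_sum, trace_pureState, ← Complex.ofReal_sum] at htr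
  simpa only [hcol, Pi.smul_apply, smul_eq_mul, norm_mul, mul_pow, ← Finset.mul_sum,
    show ∑ i, ‖w i‖ ^ 2 = 1 from hw, mul_one] using Complex.ofReal_injective htr

end PureState

section Kraus

open Finset

variable {m n : Type*} [Fintype n] {K : Matrix m n ℂ}

omit [Fintype n] in
theorem incoherentKraus_conjTranspose_iff :
    IncoherentKraus Kᴴ ↔ ∀ j, ∃ i, ∀ i', K j i' ≠ 0 → i' = i := by
  simp [IncoherentKraus, conjTranspose_apply]

theorem norm_mulVec_apply_sq_of_incoherentKraus_conjTranspose (hK : IncoherentKraus Kᴴ)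
    (v : n → ℂ) (j : m) : ‖(K *ᵥ v) j‖ ^ 2 = ∑ i, ‖K j i * v i‖ ^ 2 := by
  obtain ⟨i₀, hi₀⟩ := incoherentKraus_conjTranspose_iff.mp hK j
  have hzero : ∀ i, i ≠ i₀ → K j i = 0 := fun i hi => not_not.mp (mt (hi₀ i) hi)
  rw [mulVec, dotProduct, sum_eq_single i₀ (fun i _ hi => by rw [hzero i hi, zero_mul])
    (by simp), sum_eq_single i₀ (fun i _ hi => by simp [hzero i hi]) (by simp)]

variable [Fintype m]

theorem StrictlyIncoherentKraus.exists_card_le_sum_le (hK : StrictlyIncoherentKraus K)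
    (v : n → ℂ) (A : Finset n) :
    ∃ B : Finset m, B.card ≤ A.card ∧
      ∑ i ∈ A, ∑ j, ‖K j i * v i‖ ^ 2 ≤ ∑ j ∈ B, ‖(K *ᵥ v) j‖ ^ 2 := by
  classical
  refine ⟨({j | ∃ i ∈ A, K j i ≠ 0} : Finset m), ?_, ?_⟩
  · have hcol : ∀ i, #{j | K j i ≠ 0} ≤ 1 := fun i => by
      obtain ⟨j₀, hj₀⟩ := hK.1 i
      exact card_le_one.mpr fun a ha b hb =>
        (hj₀ a (by simpa using ha)).trans (hj₀ b (by simpa using hb)).symm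
    calc #{j | ∃ i ∈ A, K j i ≠ 0} ≤ #(A.biUnion fun i => {j | K j i ≠ 0}) :=
          card_le_card fun j hj => by simpa using hj
      _ ≤ ∑ i ∈ A, #{j | K j i ≠ 0} := card_biUnion_le
      _ ≤ ∑ i ∈ A, 1 := sum_le_sum fun i _ => hcol i
      _ = A.card := by simp
  · have hsupp : ∀ j ∈ univ, ∑ i ∈ A, ‖K j i * v i‖ ^ 2 ≠ 0 → ∃ i ∈ A, K j i ≠ 0 :=
      fun j _ hj => by
        obtain ⟨i, hi, hne⟩ := exists_ne_zero_of_sum_ne_zero hj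
        exact ⟨i, hi, fun h0 => hne (by simp [h0])⟩
    rw [sum_comm, ← sum_filter_of_ne hsupp]
    refine sum_le_sum fun j _ => ?_
    rw [norm_mulVec_apply_sq_of_incoherentKraus_conjTranspose hK.2]
    exact sum_le_univ_sum_of_nonneg fun _ => sq_nonneg _

end Kraus

section KrausFamily

open Finset

variable {l m n : Type*} [Fintype l] [Fintype m] [DecidableEq n] {K : l → Matrix m n ℂ}

theorem sum_sum_norm_sq_eq_one_of_sum_conjTranspose_mul_self_eq_one
    (hTP : ∑ k, (K k)ᴴ * K k = 1) (i : n) : ∑ k, ∑ j, ‖K k j i‖ ^ 2 = 1 := by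
  have h := congrFun₂ hTP i i
  simp only [Matrix.sum_apply, mul_apply, conjTranspose_apply, Complex.star_def,
    Complex.conj_mul', one_apply_eq] at h
  exact_mod_cast h

theorem sum_norm_sq_le_sumTop [Fintype n] (hK : ∀ k, StrictlyIncoherentKraus (K k))
    (hTP : ∑ k, (K k)ᴴ * K k = 1) {v : n → ℂ} {w : m → ℂ} {c : l → ℂ}
    (hc : ∀ k, K k *ᵥ v = c k • w) (hc1 : ∑ k, ‖c k‖ ^ 2 = 1) {A : Finset n}
    (hA : A.card ≤ Fintype.card m) :
    ∑ i ∈ A, ‖v i‖ ^ 2 ≤ sumTop (fun j => ‖w j‖ ^ 2) A.card := by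
  have hbound : ∀ k, ∑ i ∈ A, ∑ j, ‖K k j i * v i‖ ^ 2 ≤
      ‖c k‖ ^ 2 * sumTop (fun j => ‖w j‖ ^ 2) A.card := fun k => by
    obtain ⟨B, hB, hle⟩ := (hK k).exists_card_le_sum_le v A
    calc _ ≤ ∑ j ∈ B, ‖(K k *ᵥ v) j‖ ^ 2 := hle
      _ = ‖c k‖ ^ 2 * ∑ j ∈ B, ‖w j‖ ^ 2 := by simp [hc, mul_pow, mul_sum]
      _ ≤ _ := mul_le_mul_of_nonneg_left
          (sum_le_sumTop_of_card_le (fun j => sq_nonneg _) hB hA) (sq_nonneg _)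
  calc ∑ i ∈ A, ‖v i‖ ^ 2 = ∑ k, ∑ i ∈ A, ∑ j, ‖K k j i * v i‖ ^ 2 := by
        rw [sum_comm]
        refine sum_congr rfl fun i _ => ?_
        simp_rw [norm_mul, mul_pow, ← sum_mul,
          sum_sum_norm_sq_eq_one_of_sum_conjTranspose_mul_self_eq_one hTP i, one_mul]
    _ ≤ ∑ k, ‖c k‖ ^ 2 * sumTop (fun j => ‖w j‖ ^ 2) A.card := sum_le_sum fun k _ => hbound k
    _ = sumTop (fun j => ‖w j‖ ^ 2) A.card := by rw [← sum_mul, hc1, one_mul]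

end KrausFamily

/-- If a strictly incoherent operation transforms the pure state `φ`
into the pure state `ψ`, then `Δ(ψ) ≻ Δ(φ)`. -/
theorem strictIC_implies_majorization {d : ℕ} (v w : Fin d → ℂ)
    (hv : IsUnitVec v) (hw : IsUnitVec w)
    (T : Matrix (Fin d) (Fin d) ℂ → Matrix (Fin d) (Fin d) ℂ)
    (hT : IsStrictlyIncoherentOp T) (hTv : T (pureState v) = pureState w) :
    MajorizesMat (dephase (pureState w)) (dephase (pureState v)) := by
  obtain ⟨m, K, hK, hTP, hrep⟩ := hT
  have hmix : ∑ k, pureState (K k *ᵥ v) = pureState w := by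
    simpa only [hrep, mul_pureState_mul_conjTranspose] using hTv
  obtain ⟨c, hc, hc1⟩ := exists_smul_eq_of_sum_pureState_eq hw hmix
  rw [dephase_pureState, dephase_pureState]
  exact majorizesMat_diagonal_ofReal
    (fun A => sum_norm_sq_le_sumTop hK hTP hc hc1 A.card_le_univ) (hw.trans hv.symm)

end Coherence
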